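/- Let A ∈ ℝ^{m×n} and b ∈ ℝ^m be nonzero with the solution set H = {x : Ax = b} nonempty, and suppose ker A ≠ {0}. Then 0 belongs to the closed convex hull of ρ(cone(H)), where ρ is the radial projection of any norm, yet 0 ∉ cone(H); consequently cone(H) is not Capra-convex. -/

import Mathlib

/-! The Capra conjugate of the indicator of `K` at `y` is the support function of `ρ(K)` at `y`,
so it is nonnegative as soon as `0 ∈ cl conv ρ(K)`; since `ρ(0) = 0`, the biconjugate at `0` is
then `≤ 0`, while the indicator of `K` at `0` is `⊤` when `0 ∉ K`.

For `x₀ ∈ H` and `0 ≠ u ∈ ker A` the whole line `x₀ + ℝ u` lies in `H`, and `0 ∉ H` because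
`b ≠ 0`. Weighting `ρ(x₀ + t u)` and `ρ(x₀ - t u)` proportionally to `N(x₀ ± t u)` gives the point
`2 x₀ / (N(x₀ + t u) + N(x₀ - t u))` of `conv ρ(H)`, which tends to `0` because the denominator is
at least `N(2 t u) = 2 t N u`. -/

open Classical in
noncomputable def radProj {d : ℕ} (N : EuclideanSpace ℝ (Fin d) → ℝ)
    (x : EuclideanSpace ℝ (Fin d)) : EuclideanSpace ℝ (Fin d) :=
  if x = 0 then 0 else (N x)⁻¹ • x

noncomputable def capraConj {d : ℕ} (N : EuclideanSpace ℝ (Fin d) → ℝ)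
    (f : EuclideanSpace ℝ (Fin d) → EReal) (y : EuclideanSpace ℝ (Fin d)) : EReal :=
  ⨆ x : EuclideanSpace ℝ (Fin d), ((inner ℝ (radProj N x) y : ℝ) : EReal) - f x

noncomputable def capraBiconj {d : ℕ} (N : EuclideanSpace ℝ (Fin d) → ℝ)
    (f : EuclideanSpace ℝ (Fin d) → EReal) (x : EuclideanSpace ℝ (Fin d)) : EReal :=
  ⨆ y : EuclideanSpace ℝ (Fin d), ((inner ℝ (radProj N x) y : ℝ) : EReal) - capraConj N f y

open Classical in
noncomputable def ind {d : ℕ} (X : Set (EuclideanSpace ℝ (Fin d)))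
    (x : EuclideanSpace ℝ (Fin d)) : EReal :=
  if x ∈ X then 0 else ⊤

def IsCapraConvex {d : ℕ} (N : EuclideanSpace ℝ (Fin d) → ℝ)
    (X : Set (EuclideanSpace ℝ (Fin d))) : Prop :=
  ind X = capraBiconj N (ind X)

def coneHull {d : ℕ} (A : Set (EuclideanSpace ℝ (Fin d))) : Set (EuclideanSpace ℝ (Fin d)) :=
  {y | ∃ a ∈ A, ∃ l : ℝ, 0 < l ∧ y = l • a}

section Capra

variable {d : ℕ} (N : EuclideanSpace ℝ (Fin d) → ℝ)

@[simp]
lemma radProj_zero : radProj N 0 = 0 := if_pos rfl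

lemma inner_radProj_le_capraConj_ind {K : Set (EuclideanSpace ℝ (Fin d))}
    {x : EuclideanSpace ℝ (Fin d)} (hx : x ∈ K) (y : EuclideanSpace ℝ (Fin d)) :
    ((inner ℝ (radProj N x) y : ℝ) : EReal) ≤ capraConj N (ind K) y := by
  have h := le_iSup (fun z => ((inner ℝ (radProj N z) y : ℝ) : EReal) - ind K z) x
  rwa [ind, if_pos hx, sub_zero] at h

lemma capraConj_ind_nonneg {K : Set (EuclideanSpace ℝ (Fin d))}
    (h : (0 : EuclideanSpace ℝ (Fin d)) ∈ closure (convexHull ℝ (radProj N '' K)))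
    (y : EuclideanSpace ℝ (Fin d)) : 0 ≤ capraConj N (ind K) y := by
  suffices ∀ r : ℝ, capraConj N (ind K) y < r → 0 ≤ r by
    by_contra! hneg
    obtain ⟨r, hr, hr0⟩ := EReal.exists_between_coe_real hneg
    exact absurd (this r hr) (not_le.2 (EReal.coe_lt_coe_iff.1 hr0))
  intro r hr
  let S : Set (EuclideanSpace ℝ (Fin d)) := {z | inner ℝ z y ≤ r}
  have hS_closed : IsClosed S := isClosed_le (continuous_id.inner continuous_const) continuous_const
  have hS_convex : Convex ℝ S :=
    convex_halfSpace_le ⟨fun a b => inner_add_left a b y, fun c a => real_inner_smul_left a y c⟩ r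
  have hKS : radProj N '' K ⊆ S := by
    rintro _ ⟨x, hx, rfl⟩
    exact EReal.coe_le_coe_iff.1 ((inner_radProj_le_capraConj_ind N hx y).trans hr.le)
  have h0S : (0 : EuclideanSpace ℝ (Fin d)) ∈ S :=
    closure_minimal (convexHull_min hKS hS_convex) hS_closed h
  simpa [S] using h0S

lemma capraBiconj_ind_zero_nonpos {K : Set (EuclideanSpace ℝ (Fin d))}
    (h : (0 : EuclideanSpace ℝ (Fin d)) ∈ closure (convexHull ℝ (radProj N '' K))) :
    capraBiconj N (ind K) 0 ≤ 0 :=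
  iSup_le fun y => by
    simpa [radProj_zero, EReal.neg_le] using capraConj_ind_nonneg N h y

theorem not_isCapraConvex_of_zero_mem_closure_convexHull {K : Set (EuclideanSpace ℝ (Fin d))}
    (hK : (0 : EuclideanSpace ℝ (Fin d)) ∉ K)
    (h : (0 : EuclideanSpace ℝ (Fin d)) ∈ closure (convexHull ℝ (radProj N '' K))) :
    ¬ IsCapraConvex N K := by
  intro hcvx
  have htop : ind K 0 = ⊤ := if_neg hK
  have : (⊤ : EReal) ≤ 0 := htop ▸ (congrFun hcvx 0).trans_le (capraBiconj_ind_zero_nonpos N h)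
  exact absurd this (by simp)

end Capra

section Cone

variable {d : ℕ}

lemma subset_coneHull (X : Set (EuclideanSpace ℝ (Fin d))) : X ⊆ coneHull X :=
  fun x hx => ⟨x, hx, 1, one_pos, (one_smul ℝ x).symm⟩

lemma zero_mem_coneHull_iff {X : Set (EuclideanSpace ℝ (Fin d))} :
    (0 : EuclideanSpace ℝ (Fin d)) ∈ coneHull X ↔ 0 ∈ X := by
  refine ⟨?_, fun h => subset_coneHull X h⟩
  rintro ⟨a, ha, l, hl, h0⟩
  rwa [(smul_eq_zero.1 h0.symm).resolve_left hl.ne'] at ha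

end Cone

section RadialProjection

variable {d : ℕ} {N : EuclideanSpace ℝ (Fin d) → ℝ}

lemma nonneg_of_abs_homogeneous_of_subadditive
    (hNh : ∀ (a : ℝ) (x : EuclideanSpace ℝ (Fin d)), N (a • x) = |a| * N x)
    (hNt : ∀ x y : EuclideanSpace ℝ (Fin d), N (x + y) ≤ N x + N y)
    (x : EuclideanSpace ℝ (Fin d)) : 0 ≤ N x := by
  have h0 : N 0 = 0 := by simpa using hNh 0 0
  have hneg : N (-x) = N x := by simpa using hNh (-1) x
  have := hNt x (-x)
  rw [add_neg_cancel, h0, hneg] at this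
  linarith

lemma pos_of_abs_homogeneous_of_subadditive
    (hN0 : ∀ x : EuclideanSpace ℝ (Fin d), N x = 0 ↔ x = 0)
    (hNh : ∀ (a : ℝ) (x : EuclideanSpace ℝ (Fin d)), N (a • x) = |a| * N x)
    (hNt : ∀ x y : EuclideanSpace ℝ (Fin d), N (x + y) ≤ N x + N y)
    {x : EuclideanSpace ℝ (Fin d)} (hx : x ≠ 0) : 0 < N x :=
  (nonneg_of_abs_homogeneous_of_subadditive hNh hNt x).lt_of_ne (Ne.symm (mt (hN0 x).1 hx))

lemma smul_add_mem_convexHull_radProj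
    (hN0 : ∀ x : EuclideanSpace ℝ (Fin d), N x = 0 ↔ x = 0)
    (hNh : ∀ (a : ℝ) (x : EuclideanSpace ℝ (Fin d)), N (a • x) = |a| * N x)
    (hNt : ∀ x y : EuclideanSpace ℝ (Fin d), N (x + y) ≤ N x + N y)
    {S : Set (EuclideanSpace ℝ (Fin d))} {p q : EuclideanSpace ℝ (Fin d)}
    (hp : p ∈ S) (hq : q ∈ S) (hp0 : p ≠ 0) (hq0 : q ≠ 0) :
    (N p + N q)⁻¹ • (p + q) ∈ convexHull ℝ (radProj N '' S) := by
  have hNp : 0 < N p := pos_of_abs_homogeneous_of_subadditive hN0 hNh hNt hp0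
  have hNq : 0 < N q := pos_of_abs_homogeneous_of_subadditive hN0 hNh hNt hq0
  have hcomb : (N p + N q)⁻¹ • (p + q) =
      (N p / (N p + N q)) • radProj N p + (N q / (N p + N q)) • radProj N q := by
    rw [radProj, radProj, if_neg hp0, if_neg hq0, smul_smul, smul_smul, smul_add]
    congr 2 <;> field_simp
  rw [hcomb]
  exact convex_convexHull ℝ _ (subset_convexHull ℝ _ (Set.mem_image_of_mem _ hp))
    (subset_convexHull ℝ _ (Set.mem_image_of_mem _ hq)) (by positivity) (by positivity) (by field_simp)

theorem zero_mem_closure_convexHull_radProj_of_line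
    (hN0 : ∀ x : EuclideanSpace ℝ (Fin d), N x = 0 ↔ x = 0)
    (hNh : ∀ (a : ℝ) (x : EuclideanSpace ℝ (Fin d)), N (a • x) = |a| * N x)
    (hNt : ∀ x y : EuclideanSpace ℝ (Fin d), N (x + y) ≤ N x + N y)
    {X : Set (EuclideanSpace ℝ (Fin d))} (hX : (0 : EuclideanSpace ℝ (Fin d)) ∉ X)
    {x₀ u : EuclideanSpace ℝ (Fin d)} (hu : u ≠ 0) (hline : ∀ t : ℝ, x₀ + t • u ∈ X) :
    (0 : EuclideanSpace ℝ (Fin d)) ∈ closure (convexHull ℝ (radProj N '' X)) := by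
  rw [Metric.mem_closure_iff]
  intro ε hε
  have hNu : 0 < N u := pos_of_abs_homogeneous_of_subadditive hN0 hNh hNt hu
  set t : ℝ := (‖x₀‖ + 1) / (ε * N u)
  have ht : 0 < t := by positivity
  set p := x₀ + t • u
  set q := x₀ + (-t) • u
  have hp0 : p ≠ 0 := fun h => hX (h ▸ hline t)
  have hq0 : q ≠ 0 := fun h => hX (h ▸ hline (-t))
  have hsum : p + q = (2 : ℝ) • x₀ := by simp only [p, q, neg_smul]; module
  have hlower : 2 * t * N u ≤ N p + N q := by
    have hdiff : p + -q = (2 * t) • u := by simp only [p, q, neg_smul]; module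
    have hnegq : N (-q) = N q := by simpa using hNh (-1) q
    have := hNt p (-q)
    rw [hdiff, hnegq, hNh, abs_of_pos (by positivity)] at this
    linarith
  refine ⟨_, smul_add_mem_convexHull_radProj hN0 hNh hNt (hline t) (hline (-t)) hp0 hq0, ?_⟩
  have hpos : 0 < N p + N q := lt_of_lt_of_le (by positivity) hlower
  calc dist 0 ((N p + N q)⁻¹ • (p + q))
      = 2 * ‖x₀‖ / (N p + N q) := by
        rw [dist_zero_left, hsum, smul_smul, norm_smul, Real.norm_of_nonneg (by positivity)]
        field_simp
    _ ≤ 2 * ‖x₀‖ / (2 * t * N u) := by gcongr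
    _ = ε * (‖x₀‖ / (‖x₀‖ + 1)) := by simp only [t]; field_simp
    _ < ε := mul_lt_of_lt_one_right hε ((div_lt_one (by positivity)).2 (lt_add_one _))

end RadialProjection

lemma add_smul_mem_of_mem_ker {m n : ℕ} {A : Matrix (Fin m) (Fin n) ℝ} {b : Fin m → ℝ}
    {x u : EuclideanSpace ℝ (Fin n)} (hx : ∀ i, ∑ j, A i j * x j = b i)
    (hu : ∀ i, ∑ j, A i j * u j = 0) (t : ℝ) (i : Fin m) :
    ∑ j, A i j * (x + t • u) j = b i := by
  simp only [PiLp.add_apply, PiLp.smul_apply, smul_eq_mul, mul_add, Finset.sum_add_distrib,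
    mul_left_comm _ t, ← Finset.mul_sum, hx, hu, mul_zero, add_zero]

theorem stmt_general {m n : ℕ} (N : EuclideanSpace ℝ (Fin n) → ℝ)
    (hN0 : ∀ x : EuclideanSpace ℝ (Fin n), N x = 0 ↔ x = 0)
    (hNh : ∀ (a : ℝ) (x : EuclideanSpace ℝ (Fin n)), N (a • x) = |a| * N x)
    (hNt : ∀ x y : EuclideanSpace ℝ (Fin n), N (x + y) ≤ N x + N y)
    (A : Matrix (Fin m) (Fin n) ℝ) (b : Fin m → ℝ) (hb : b ≠ 0)
    (H : Set (EuclideanSpace ℝ (Fin n))) (hH : H = {x : EuclideanSpace ℝ (Fin n) | ∀ i, ∑ j, A i j * x j = b i})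
    (hHne : H.Nonempty)
    (hker : ∃ x : EuclideanSpace ℝ (Fin n), x ≠ 0 ∧ ∀ i, ∑ j, A i j * x j = 0) :
    (0 : EuclideanSpace ℝ (Fin n)) ∈ closure (convexHull ℝ (radProj N '' coneHull H)) ∧
    (0 : EuclideanSpace ℝ (Fin n)) ∉ coneHull H ∧
    ¬ IsCapraConvex N (coneHull H) := by
  subst hH
  obtain ⟨x₀, hx₀⟩ := hHne
  obtain ⟨u, hu, hAu⟩ := hker
  have h0H : (0 : EuclideanSpace ℝ (Fin n)) ∉ {x | ∀ i, ∑ j, A i j * x j = b i} :=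
    fun h => hb (funext fun i => by simpa using (h i).symm)
  have h0K := zero_mem_coneHull_iff.not.2 h0H
  have hzero := closure_mono (convexHull_mono (Set.image_mono (subset_coneHull _)))
    (zero_mem_closure_convexHull_radProj_of_line hN0 hNh hNt h0H hu
      (fun t => add_smul_mem_of_mem_ker hx₀ hAu t))
  exact ⟨hzero, h0K, not_isCapraConvex_of_zero_mem_closure_convexHull N h0K hzero⟩

theorem stmt {m n : ℕ} (N : EuclideanSpace ℝ (Fin n) → ℝ)
    (hN0 : ∀ x : EuclideanSpace ℝ (Fin n), N x = 0 ↔ x = 0)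
    (hNh : ∀ (a : ℝ) (x : EuclideanSpace ℝ (Fin n)), N (a • x) = |a| * N x)
    (hNt : ∀ x y : EuclideanSpace ℝ (Fin n), N (x + y) ≤ N x + N y)
    (A : Matrix (Fin m) (Fin n) ℝ) (b : Fin m → ℝ) (hA : A ≠ 0) (hb : b ≠ 0)
    (H : Set (EuclideanSpace ℝ (Fin n))) (hH : H = {x : EuclideanSpace ℝ (Fin n) | ∀ i, ∑ j, A i j * x j = b i})
    (hHne : H.Nonempty)
    (hker : ∃ x : EuclideanSpace ℝ (Fin n), x ≠ 0 ∧ ∀ i, ∑ j, A i j * x j = 0) :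
    (0 : EuclideanSpace ℝ (Fin n)) ∈ closure (convexHull ℝ (radProj N '' coneHull H)) ∧
    (0 : EuclideanSpace ℝ (Fin n)) ∉ coneHull H ∧
    ¬ IsCapraConvex N (coneHull H) :=
  stmt_general N hN0 hNh hNt A b hb H hH hHne hker
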